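/- arXiv:2208.02502 — 6 statements merged into one kernel-verified Lean document; each statement's English description precedes it below -/
import Mathlib

section
/- Let L : ℝ^m → ℝ^n be a linear map and let F : ℝ^m → ℝ^m be differentiable. If the dynamics of P = L Q is autonomous, i.e., there exists a map G : ℝ^n → ℝ^n such that L (F Q) = G (L Q) for all Q ∈ ℝ^m, then for every Q ∈ ℝ^m and every v in the kernel of L, the composition of L with the Fréchet derivative of F at Q annihilates v: L ((fderiv ℝ F Q) v) = 0. -/
/-- **Theorem 1 (Yuasa–Ito), forward direction.**
If the dynamics of `P = L Q` is autonomous, i.e. `L (F Q)` is a function of `L Q`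
alone, then for every `Q` the composition of `L` with the Fréchet derivative of `F`
at `Q` annihilates the kernel of `L`. -/
theorem stmt_0 (m n : ℕ)
    (L : EuclideanSpace ℝ (Fin m) →ₗ[ℝ] EuclideanSpace ℝ (Fin n))
    (F : EuclideanSpace ℝ (Fin m) → EuclideanSpace ℝ (Fin m))
    (hF : Differentiable ℝ F)
    (hauto : ∃ G : EuclideanSpace ℝ (Fin n) → EuclideanSpace ℝ (Fin n),
      ∀ Q, L (F Q) = G (L Q)) :
    ∀ Q : EuclideanSpace ℝ (Fin m), ∀ v ∈ LinearMap.ker L,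
      L ((fderiv ℝ F Q) v) = 0 := by
  obtain ⟨G, hG⟩ := hauto
  intro Q v hv
  rw [LinearMap.mem_ker] at hv
  set L' := L.toContinuousLinearMap with hL'
  -- the curve t ↦ Q + t • v
  have hc : HasDerivAt (fun t : ℝ => Q + t • v) v 0 := by
    simpa using ((hasDerivAt_id (0:ℝ)).smul_const v).const_add Q
  have hLF : HasFDerivAt (fun x => L' (F x)) (L'.comp (fderiv ℝ F Q)) Q :=
    (L'.hasFDerivAt).comp Q (hF Q).hasFDerivAt
  have h1 : HasDerivAt (fun t : ℝ => L' (F (Q + t • v))) (L' ((fderiv ℝ F Q) v)) 0 := by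
    have hLF' : HasFDerivAt (fun x => L' (F x)) (L'.comp (fderiv ℝ F Q)) (Q + (0:ℝ) • v) := by
      simpa using hLF
    have := (hLF'.comp_hasDerivAt (0:ℝ) hc : HasDerivAt _ _ _)
    exact this
  have heq : (fun t : ℝ => L' (F (Q + t • v))) = fun _ : ℝ => G (L Q) := by
    funext t
    have : L (Q + t • v) = L Q := by simp [map_add, map_smul, hv]
    simp only [hL', LinearMap.coe_toContinuousLinearMap', hG, this]
  rw [heq] at h1
  have h2 : HasDerivAt (fun _ : ℝ => G (L Q)) 0 (0:ℝ) := hasDerivAt_const _ _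
  have := h1.unique h2
  simpa [hL'] using this
end

section
/- Let L : ℝ^m → ℝ^n be a linear map and let F : ℝ^m → ℝ^m be differentiable. If for every Q ∈ ℝ^m and every v in the kernel of L one has L ((fderiv ℝ F Q) v) = 0, then the map Q ↦ L (F Q) is constant on each coset Q + ker L, and hence there exists a map G : ℝ^n → ℝ^n such that L (F Q) = G (L Q) for all Q ∈ ℝ^m; that is, the dynamics of P = L Q is autonomous. -/
/-- **Theorem 1 (Yuasa–Ito), converse direction.**
If `L ∘ DF(Q)` vanishes on `ker L` for every `Q`, then `Q ↦ L (F Q)` is constant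
on each coset `Q + ker L`, and hence there is a map `G` with `L (F Q) = G (L Q)`
for all `Q`; that is, the dynamics of `P = L Q` is autonomous. -/
theorem stmt_1 (m n : ℕ)
    (L : EuclideanSpace ℝ (Fin m) →ₗ[ℝ] EuclideanSpace ℝ (Fin n))
    (F : EuclideanSpace ℝ (Fin m) → EuclideanSpace ℝ (Fin m))
    (hF : Differentiable ℝ F)
    (hker : ∀ Q : EuclideanSpace ℝ (Fin m), ∀ v ∈ LinearMap.ker L,
      L ((fderiv ℝ F Q) v) = 0) :
    (∀ Q : EuclideanSpace ℝ (Fin m), ∀ v ∈ LinearMap.ker L,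
        L (F (Q + v)) = L (F Q)) ∧
    ∃ G : EuclideanSpace ℝ (Fin n) → EuclideanSpace ℝ (Fin n),
      ∀ Q, L (F Q) = G (L Q) := by
  classical
  set L' := LinearMap.toContinuousLinearMap L with hL'
  have key : ∀ Q : EuclideanSpace ℝ (Fin m), ∀ v ∈ LinearMap.ker L,
      L (F (Q + v)) = L (F Q) := by
    intro Q v hv
    set h : ℝ → EuclideanSpace ℝ (Fin n) := fun t => L' (F (Q + t • v)) with hh
    have hder : ∀ t : ℝ, HasDerivAt h 0 t := by
      intro t
      have hγ : HasDerivAt (fun t : ℝ => Q + t • v) v t := by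
        simpa using ((hasDerivAt_id t).smul_const v).const_add Q
      have hF' : HasDerivAt (fun t : ℝ => F (Q + t • v))
          ((fderiv ℝ F (Q + t • v)) v) t :=
        (hF (Q + t • v)).hasFDerivAt.comp_hasDerivAt t hγ
      have := (L'.hasFDerivAt (x := F (Q + t • v))).comp_hasDerivAt t hF'
      have hz : L' ((fderiv ℝ F (Q + t • v)) v) = 0 := by
        simpa [hL'] using hker (Q + t • v) v hv
      rw [hz] at this; exact this
    have hconst : h 1 = h 0 := by
      apply is_const_of_deriv_eq_zero (fun t => (hder t).differentiableAt)
      intro t; exact (hder t).deriv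
    simpa [hh, hL'] using hconst
  refine ⟨key, ?_⟩
  have hcong : ∀ Q Q', L Q = L Q' → L (F Q) = L (F Q') := by
    intro Q Q' hQ
    have hv : Q' - Q ∈ LinearMap.ker L := by
      simp [LinearMap.mem_ker, map_sub, hQ]
    simpa using (key Q (Q' - Q) hv).symm
  refine ⟨fun p => if h : ∃ Q, L Q = p then L (F h.choose) else 0, fun Q => ?_⟩
  have hex : ∃ Q', L Q' = L Q := ⟨Q, rfl⟩
  simp only [dif_pos hex]
  exact hcong Q hex.choose hex.choose_spec.symm
end

section
/- Let L be a real n × m matrix, let W : ℝ^m → ℝ be differentiable, and define V : ℝ^n → ℝ by V(P) = W(−Lᵀ P). Suppose F : ℝ^m → ℝ^m has the form F(Q) = ∇W(−Lᵀ L Q) + k(Q), where ∇W denotes the gradient of W and where k : ℝ^m → ℝ^m satisfies L k(Q) = 0 for all Q. Then for every Q ∈ ℝ^m, L F(Q) = −∇V(L Q); that is, the dynamics Ṗ = L F(Q) of P = L Q is the gradient system Ṗ = −∇V(P) with potential function V. -/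
open Matrix

/-- **Theorem 2 (Yuasa–Ito).**
Let `V (P) = W (−Lᵀ P)`.  If `F (Q) = ∇W (−Lᵀ L Q) + k (Q)` with `L (k Q) = 0`
for all `Q`, then `L (F Q) = −∇V (L Q)` for all `Q`; i.e. the dynamics
`Ṗ = L F(Q)` of `P = L Q` is the gradient system `Ṗ = −∇V(P)`. -/
theorem stmt_2 (m n : ℕ)
    (L : Matrix (Fin n) (Fin m) ℝ)
    (W : EuclideanSpace ℝ (Fin m) → ℝ)
    (hW : Differentiable ℝ W)
    (V : EuclideanSpace ℝ (Fin n) → ℝ)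
    (hV : ∀ P : EuclideanSpace ℝ (Fin n),
      V P = W (-(Matrix.toEuclideanLin Lᵀ) P))
    (F k : EuclideanSpace ℝ (Fin m) → EuclideanSpace ℝ (Fin m))
    (hk : ∀ Q, (Matrix.toEuclideanLin L) (k Q) = 0)
    (hF : ∀ Q, F Q =
      gradient W (-(Matrix.toEuclideanLin Lᵀ) ((Matrix.toEuclideanLin L) Q)) + k Q) :
    ∀ Q : EuclideanSpace ℝ (Fin m),
      (Matrix.toEuclideanLin L) (F Q) = -gradient V ((Matrix.toEuclideanLin L) Q) := by
  intro Q
  set A : EuclideanSpace ℝ (Fin n) →L[ℝ] EuclideanSpace ℝ (Fin m) :=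
    LinearMap.toContinuousLinearMap (-(Matrix.toEuclideanLin Lᵀ)) with hAdef
  set P0 : EuclideanSpace ℝ (Fin n) := (Matrix.toEuclideanLin L) Q with hP0
  set g : EuclideanSpace ℝ (Fin m) := gradient W (A P0) with hg
  have hAapp : ∀ P, A P = -(Matrix.toEuclideanLin Lᵀ) P := fun P => rfl
  have hWg : HasGradientAt W g (A P0) := (hW (A P0)).hasGradientAt
  have hcomp : HasFDerivAt (fun P => W (A P))
      (((InnerProductSpace.toDual ℝ _) g).comp A) P0 :=
    hWg.hasFDerivAt.comp P0 A.hasFDerivAt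
  -- the gradient of V at P0 is -(toEuclideanLin L) g
  have key : ((InnerProductSpace.toDual ℝ _) g).comp A =
      (InnerProductSpace.toDual ℝ _) (-(Matrix.toEuclideanLin L) g) := by
    apply ContinuousLinearMap.ext
    intro v
    simp only [ContinuousLinearMap.comp_apply, InnerProductSpace.toDual_apply_apply]
    rw [hAapp]
    have : (Matrix.toEuclideanLin Lᵀ) = LinearMap.adjoint (Matrix.toEuclideanLin L) := by
      rw [← Matrix.toEuclideanLin_conjTranspose_eq_adjoint]
      congr 1
    rw [this]
    simp [inner_neg_left, inner_neg_right, LinearMap.adjoint_inner_right]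
  have hVgrad : HasGradientAt V (-(Matrix.toEuclideanLin L) g) P0 := by
    have : HasFDerivAt V (((InnerProductSpace.toDual ℝ _) g).comp A) P0 := by
      refine hcomp.congr_of_eventuallyEq ?_
      filter_upwards with P
      rw [hV P, hAapp]
    rw [key] at this
    rw [hasGradientAt_iff_hasFDerivAt]
    exact this
  rw [hVgrad.gradient, hF Q, map_add, hk Q, add_zero, hg, neg_neg]
  rfl
end

section
/- Let L be a real n × m matrix, x_d ∈ ℝ^m, and for each i let f̃ᵢ : ℝ → ℝ be continuous. Define V : ℝ^m → ℝ by V(X) = Σᵢ ∫_{x_{di}}^{Xᵢ} f̃ᵢ(s) ds. Let X : ℝ → ℝ^m be differentiable and satisfy the dynamics Ẋ(t) = −Lᵀ L f̃(X(t)), where f̃(X)ᵢ = f̃ᵢ(Xᵢ). Then for every t, the derivative of V along the trajectory satisfies d/dt V(X(t)) = −‖L f̃(X(t))‖² ≤ 0, where ‖·‖ is the Euclidean norm on ℝ^n. -/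
open Matrix

/-- **Lyapunov decrease along trajectories (Theorem 3 proof).**
Along any solution of `Ẋ = −Lᵀ L f̃(X)`, the potential
`V(X) = Σᵢ ∫_{x_{di}}^{Xᵢ} f̃ᵢ(s) ds` satisfies
`d/dt V(X(t)) = −‖L f̃(X(t))‖² ≤ 0`, where `‖·‖` is the Euclidean norm on `ℝⁿ`. -/
theorem stmt_7 (m n : ℕ)
    (L : Matrix (Fin n) (Fin m) ℝ)
    (xd : Fin m → ℝ)
    (f : Fin m → ℝ → ℝ)
    (hcont : ∀ i, Continuous (f i))
    (V : (Fin m → ℝ) → ℝ)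
    (hV : ∀ Y : Fin m → ℝ, V Y = ∑ i, ∫ s in (xd i)..(Y i), f i s)
    (X : ℝ → Fin m → ℝ)
    (hX : ∀ t : ℝ,
      HasDerivAt X (-(Lᵀ.mulVec (L.mulVec (fun i => f i (X t i))))) t) :
    ∀ t : ℝ,
      HasDerivAt (fun t => V (X t))
        (-‖(WithLp.equiv 2 (Fin n → ℝ)).symm
            (L.mulVec (fun i => f i (X t i)))‖ ^ 2) t ∧
      (-‖(WithLp.equiv 2 (Fin n → ℝ)).symm
            (L.mulVec (fun i => f i (X t i)))‖ ^ 2 : ℝ) ≤ 0 := by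
  intro t
  set g : Fin m → ℝ := fun i => f i (X t i) with hg
  set w : Fin n → ℝ := L.mulVec g with hw
  have hnormsq : ‖(WithLp.equiv 2 (Fin n → ℝ)).symm w‖ ^ 2 = ∑ j, w j ^ 2 := by
    rw [EuclideanSpace.norm_eq]
    rw [Real.sq_sqrt (Finset.sum_nonneg fun j _ => sq_nonneg _)]
    simp [sq_abs]
  have hcomp : ∀ i : Fin m,
      HasDerivAt (fun s => X s i) (-(Lᵀ.mulVec w) i) t := by
    intro i
    have := (hasDerivAt_pi.mp (hX t)) i
    simpa [hw, hg, Matrix.mulVec_mulVec] using this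
  have hterm : ∀ i : Fin m,
      HasDerivAt (fun s => ∫ u in (xd i)..(X s i), f i u)
        (g i * -(Lᵀ.mulVec w) i) t := by
    intro i
    have hftc : HasDerivAt (fun y => ∫ u in (xd i)..y, f i u) (f i (X t i)) (X t i) :=
      intervalIntegral.integral_hasDerivAt_right
        ((hcont i).intervalIntegrable _ _)
        ((hcont i).stronglyMeasurableAtFilter _ _)
        (hcont i).continuousAt
    exact hftc.comp t (hcomp i)
  have hsum : HasDerivAt (fun s => ∑ i, ∫ u in (xd i)..(X s i), f i u)
      (∑ i, g i * -(Lᵀ.mulVec w) i) t :=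
    HasDerivAt.fun_sum fun i _ => hterm i
  have hkey : (∑ i, g i * -(Lᵀ.mulVec w) i)
      = -‖(WithLp.equiv 2 (Fin n → ℝ)).symm w‖ ^ 2 := by
    rw [hnormsq]
    have : (∑ i, g i * -(Lᵀ.mulVec w) i) = -(g ⬝ᵥ Lᵀ.mulVec w) := by
      simp [dotProduct, Finset.sum_neg_distrib]
    rw [this, Matrix.dotProduct_mulVec, Matrix.vecMul_transpose, ← hw]
    simp [dotProduct, sq]
  constructor
  · have : HasDerivAt (fun s => V (X s))
        (∑ i, g i * -(Lᵀ.mulVec w) i) t := by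
      have heq : (fun s => V (X s)) = fun s => ∑ i, ∫ u in (xd i)..(X s i), f i u := by
        funext s; exact hV (X s)
      rw [heq]; exact hsum
    rwa [hkey] at this
  · exact neg_nonpos.mpr (sq_nonneg _)
end

section
/- Fix n ≥ 1, a constant vector p ∈ ℝ^n, and constants τ_p with 0 < τ_p < 1. Let p_d : ℝ → ℝ^n be differentiable and satisfy, for each i, the adaptation law ṗ_{di}(t) = (2/π) · arctan(τ_p (pᵢ − p_{di}(t))). Define E(t) = (1/2) Σᵢ (pᵢ − p_{di}(t))². Then for every t, E′(t) = −Σᵢ (2/π)(pᵢ − p_{di}(t)) · arctan(τ_p (pᵢ − p_{di}(t))), and E′(t) < 0 whenever p_d(t) ≠ p. -/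
lemma term_nonneg (c x : ℝ) (hc : 0 < c) :
    0 ≤ (2 / Real.pi) * x * Real.arctan (c * x) := by
  have hpi : 0 < 2 / Real.pi := by positivity
  rcases lt_trichotomy x 0 with h | h | h
  · have : Real.arctan (c * x) < 0 := by
      rw [← Real.arctan_zero]
      exact Real.arctan_strictMono (by nlinarith)
    have := mul_pos (mul_pos hpi (neg_pos.mpr h)) (neg_pos.mpr this)
    nlinarith
  · simp [h]
  · have : 0 < Real.arctan (c * x) := by
      rw [← Real.arctan_zero]
      exact Real.arctan_strictMono (by nlinarith)
    have := mul_pos (mul_pos hpi h) this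
    nlinarith

lemma term_pos (c x : ℝ) (hc : 0 < c) (hx : x ≠ 0) :
    0 < (2 / Real.pi) * x * Real.arctan (c * x) := by
  have hpi : 0 < 2 / Real.pi := by positivity
  rcases hx.lt_or_gt with h | h
  · have : Real.arctan (c * x) < 0 := by
      rw [← Real.arctan_zero]
      exact Real.arctan_strictMono (by nlinarith)
    have := mul_pos (mul_pos hpi (neg_pos.mpr h)) (neg_pos.mpr this)
    nlinarith
  · have : 0 < Real.arctan (c * x) := by
      rw [← Real.arctan_zero]
      exact Real.arctan_strictMono (by nlinarith)
    have := mul_pos (mul_pos hpi h) this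
    nlinarith

/-- **Stability of the adaptation law (equation (4)).**
Under the adaptation law `ṗ_{di} = (2/π) arctan(τ_p (pᵢ − p_{di}))` with constant
`p` and `0 < τ_p < 1`, the objective `E(t) = ½ Σᵢ (pᵢ − p_{di}(t))²` satisfies
`E′(t) = −Σᵢ (2/π)(pᵢ − p_{di}(t)) arctan(τ_p (pᵢ − p_{di}(t)))`, and `E′(t) < 0`
whenever `p_d(t) ≠ p`. -/
theorem stmt_8 (n : ℕ) (hn : 1 ≤ n)
    (p : Fin n → ℝ) (τ : ℝ) (hτ0 : 0 < τ) (hτ1 : τ < 1)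
    (pd : ℝ → Fin n → ℝ)
    (hpd : ∀ i : Fin n, ∀ t : ℝ,
      HasDerivAt (fun t => pd t i)
        ((2 / Real.pi) * Real.arctan (τ * (p i - pd t i))) t)
    (E : ℝ → ℝ)
    (hE : ∀ t : ℝ, E t = (1 / 2) * ∑ i, (p i - pd t i) ^ 2) :
    ∀ t : ℝ,
      HasDerivAt E
        (-∑ i, (2 / Real.pi) * (p i - pd t i) *
          Real.arctan (τ * (p i - pd t i))) t ∧
      (pd t ≠ p →
        (-∑ i, (2 / Real.pi) * (p i - pd t i) *
          Real.arctan (τ * (p i - pd t i)) : ℝ) < 0) := by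
  intro t
  constructor
  · have h1 : ∀ i : Fin n, HasDerivAt (fun s => (p i - pd s i) ^ 2)
        (-2 * (p i - pd t i) * ((2 / Real.pi) * Real.arctan (τ * (p i - pd t i)))) t := by
      intro i
      have := ((hasDerivAt_const t (p i)).sub (hpd i t)).pow 2
      refine this.congr_deriv ?_
      simp only [Pi.sub_apply]
      ring
    have hsum : HasDerivAt (fun s => ∑ i, (p i - pd s i) ^ 2)
        (∑ i, -2 * (p i - pd t i) * ((2 / Real.pi) * Real.arctan (τ * (p i - pd t i)))) t :=
      HasDerivAt.fun_sum (fun i _ => h1 i)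
    have : HasDerivAt (fun s => (1 / 2 : ℝ) * ∑ i, (p i - pd s i) ^ 2)
        (-∑ i, (2 / Real.pi) * (p i - pd t i) * Real.arctan (τ * (p i - pd t i))) t := by
      have := hsum.const_mul (1 / 2 : ℝ)
      refine this.congr_deriv ?_
      rw [← Finset.sum_neg_distrib, Finset.mul_sum]
      exact Finset.sum_congr rfl (fun i _ => by ring)
    exact this.congr_of_eventuallyEq (Filter.Eventually.of_forall fun s => hE s)
  · intro hne
    have : ∃ j : Fin n, pd t j ≠ p j := by
      by_contra h
      push_neg at h
      exact hne (funext h)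
    obtain ⟨j, hj⟩ := this
    rw [neg_lt, neg_zero]
    apply Finset.sum_pos' (fun i _ => term_nonneg τ _ hτ0)
    exact ⟨j, Finset.mem_univ j, term_pos τ _ hτ0 (sub_ne_zero.mpr (Ne.symm hj))⟩
end

section
/- Let a > 0, τ > 0 and c ∈ ℝ, and let y : ℝ → ℝ be differentiable on [0, ∞) and satisfy y′(t) = a · arctan(τ (c − y(t))) for all t ≥ 0, with y(0) < c. Then y is strictly increasing on [0, ∞), y(t) < c for all t ≥ 0, and y(t) → c as t → ∞. -/
open Real Set Filter Topology

lemma lipschitz_arctan' : LipschitzWith 1 Real.arctan := by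
  apply lipschitzWith_of_nnnorm_deriv_le Real.differentiable_arctan
  intro x
  rw [Real.deriv_arctan, ← NNReal.coe_le_coe]
  simp only [coe_nnnorm, Real.norm_eq_abs, NNReal.coe_one]
  rw [abs_of_pos (by positivity), div_le_one (by positivity)]
  nlinarith [sq_nonneg x]

lemma abs_arctan_le' (x : ℝ) : |Real.arctan x| ≤ |x| := by
  have := lipschitz_arctan'.dist_le_mul x 0
  simpa [Real.arctan_zero, Real.dist_eq] using this

lemma arctan_pos' {x : ℝ} (hx : 0 < x) : 0 < Real.arctan x := by
  have := Real.arctan_strictMono hx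
  simpa [Real.arctan_zero] using this


/-- **Scalar convergence of the adaptation law.**
If `y′(t) = a · arctan(τ (c − y(t)))` for `t ≥ 0` with `a, τ > 0` and
`y 0 < c`, then `y` is strictly increasing on `[0, ∞)`, stays below `c`,
and converges to `c` as `t → ∞`. -/
theorem stmt_9 (a τ c : ℝ) (ha : 0 < a) (hτ : 0 < τ)
    (y : ℝ → ℝ)
    (hy : ∀ t : ℝ, 0 ≤ t →
      HasDerivAt y (a * Real.arctan (τ * (c - y t))) t)
    (h0 : y 0 < c) :
    StrictMonoOn y (Set.Ici (0 : ℝ)) ∧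
    (∀ t : ℝ, 0 ≤ t → y t < c) ∧
    Filter.Tendsto y Filter.atTop (nhds c) := by
  have hycont : ContinuousOn y (Ici (0:ℝ)) := fun t ht =>
    (hy t ht).continuousAt.continuousWithinAt
  -- Step 1: y t < c for all t ≥ 0
  have hlt : ∀ t : ℝ, 0 ≤ t → y t < c := by
    by_contra h
    push_neg at h
    obtain ⟨t₀, ht₀, hc⟩ := h
    have ht₀pos : 0 < t₀ := by
      rcases ht₀.eq_or_lt with h' | h'
      · exact absurd hc (by rw [← h']; exact not_le.2 h0)
      · exact h'
    -- the set where y reaches c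
    set S : Set ℝ := Icc 0 t₀ ∩ y ⁻¹' (Ici c) with hS
    have hSne : S.Nonempty := ⟨t₀, ⟨ht₀, le_rfl⟩, hc⟩
    have hScl : IsClosed S := by
      apply ContinuousOn.preimage_isClosed_of_isClosed
        (hycont.mono (Icc_subset_Ici_self)) isClosed_Icc isClosed_Ici
    have hSbdd : BddBelow S := ⟨0, fun x hx => hx.1.1⟩
    set T := sInf S with hT
    have hTS : T ∈ S := hScl.csInf_mem hSne hSbdd
    have hT0 : 0 ≤ T := hTS.1.1
    have hTpos : 0 < T := by
      rcases hT0.eq_or_lt with h' | h'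
      · exact absurd hTS.2 (by rw [← h']; exact not_le.2 h0)
      · exact h'
    -- y t < c for t ∈ [0, T)
    have hbelow : ∀ t ∈ Ico (0:ℝ) T, y t < c := by
      intro t ht
      by_contra hge
      push_neg at hge
      have : t ∈ S := ⟨⟨ht.1, ht.2.le.trans hTS.1.2⟩, hge⟩
      exact absurd (csInf_le hSbdd this) (not_le.2 ht.2)
    -- y T = c by continuity from the left
    have hyT : y T = c := by
      refine le_antisymm ?_ hTS.2
      have hcl : ContinuousWithinAt y (Ico 0 T) T :=
        ((hy T hT0).continuousAt.continuousWithinAt)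
      have hne : (𝓝[Ico (0:ℝ) T] T).NeBot := by
        rw [← mem_closure_iff_nhdsWithin_neBot, closure_Ico hTpos.ne]
        exact ⟨hT0, le_rfl⟩
      exact le_of_tendsto hcl (eventually_nhdsWithin_of_forall
        (fun t ht => (hbelow t ht).le))
    -- Grönwall backwards: F s = y (T - s) - c
    set F : ℝ → ℝ := fun s => y (T - s) - c with hF
    have hFd : ∀ s ∈ Ico (0:ℝ) T,
        HasDerivAt F (-(a * Real.arctan (τ * (c - y (T - s))))) s := by
      intro s hs
      have hTs : 0 ≤ T - s := by linarith [hs.2]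
      have h1 : HasDerivAt (fun s : ℝ => T - s) (-1) s := by
        simpa using (hasDerivAt_id' s).const_sub T
      have h2 := (hy (T - s) hTs).comp s h1
      have h3 := h2.sub_const c
      convert h3 using 1
      · rfl
      · rfl
      · rfl
      · ring
    have hFcont : ContinuousOn F (Icc 0 T) := by
      apply ContinuousOn.sub _ continuousOn_const
      apply hycont.comp (by fun_prop)
      intro s hs
      simp only [mem_Ici]
      linarith [hs.2]
    have hF0 : ‖F 0‖ ≤ 0 := by simp [hF, hyT]
    have hbound : ∀ s ∈ Ico (0:ℝ) T,
        ‖-(a * Real.arctan (τ * (c - y (T - s))))‖ ≤ (a * τ) * ‖F s‖ + 0 := by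
      intro s hs
      rw [norm_neg, Real.norm_eq_abs, abs_mul, abs_of_pos ha, add_zero]
      have h1 : |Real.arctan (τ * (c - y (T - s)))| ≤ |τ * (c - y (T - s))| :=
        abs_arctan_le' _
      have h2 : |τ * (c - y (T - s))| = τ * ‖F s‖ := by
        rw [abs_mul, abs_of_pos hτ, Real.norm_eq_abs, hF]
        simp only
        rw [abs_sub_comm]
      calc a * |Real.arctan (τ * (c - y (T - s)))| ≤ a * (τ * ‖F s‖) := by
            rw [← h2]; exact mul_le_mul_of_nonneg_left h1 ha.le
        _ = a * τ * ‖F s‖ := by ring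
    have key := norm_le_gronwallBound_of_norm_deriv_right_le hFcont
      (fun s hs => (hFd s hs).hasDerivWithinAt) hF0 hbound T ⟨hT0, le_rfl⟩
    rw [gronwallBound_ε0_δ0] at key
    have : y 0 = c := by
      have := norm_le_zero_iff.1 key
      simp only [hF, sub_self] at this
      linarith [sub_eq_zero.1 this]
    linarith
  -- Step 2: strict monotonicity
  have hmono : StrictMonoOn y (Ici (0:ℝ)) := by
    apply strictMonoOn_of_deriv_pos (convex_Ici 0) hycont
    intro x hx
    rw [interior_Ici] at hx
    rw [(hy x (le_of_lt hx)).deriv]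
    have : 0 < c - y x := sub_pos.2 (hlt x hx.le)
    exact mul_pos ha (arctan_pos' (mul_pos hτ this))
  refine ⟨hmono, hlt, ?_⟩
  -- Step 3: convergence
  set z : ℝ → ℝ := fun t => y (max t 0) with hz
  have hzmono : Monotone z := by
    intro s t hst
    rcases le_or_gt (max s 0) (max t 0) with h | h
    · rcases h.eq_or_lt with h' | h'
      · show y (max s 0) ≤ y (max t 0)
        rw [h']
      · exact (hmono (le_max_right s 0) (le_max_right t 0) h').le
    · exact absurd (max_le_max hst le_rfl) (not_le.2 h)
  have hzbdd : BddAbove (range z) := ⟨c, by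
    rintro _ ⟨t, rfl⟩
    exact (hlt _ (le_max_right t 0)).le⟩
  have hztend : Tendsto z atTop (𝓝 (⨆ t, z t)) := tendsto_atTop_ciSup hzmono hzbdd
  set L := ⨆ t, z t with hL
  have hzle : ∀ t, z t ≤ L := fun t => le_ciSup hzbdd t
  have hLle : L ≤ c := ciSup_le fun t => (hlt _ (le_max_right t 0)).le
  have hLc : L = c := by
    by_contra hne
    have hLlt : L < c := lt_of_le_of_ne hLle hne
    set m := a * Real.arctan (τ * (c - L)) with hm
    have hmpos : 0 < m := mul_pos ha (arctan_pos' (mul_pos hτ (sub_pos.2 hLlt)))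
    -- deriv y ≥ m on interior
    have hge : ∀ x ∈ interior (Ici (0:ℝ)), m ≤ deriv y x := by
      intro x hx
      rw [interior_Ici] at hx
      rw [(hy x hx.le).deriv]
      have hyx : y x ≤ L := by
        have h := hzle x
        have hzx : z x = y x := by simp [hz, max_eq_left (mem_Ioi.1 hx).le]
        rwa [hzx] at h
      have : τ * (c - L) ≤ τ * (c - y x) := by nlinarith
      exact mul_le_mul_of_nonneg_left
        (Real.arctan_strictMono.monotone this) ha.le
    have hdiff : DifferentiableOn ℝ y (interior (Ici (0:ℝ))) := by
      rw [interior_Ici]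
      exact fun x hx => ((hy x hx.le).differentiableAt).differentiableWithinAt
    have hgrow := (convex_Ici (0:ℝ)).mul_sub_le_image_sub_of_le_deriv hycont hdiff hge
    -- pick t large
    set t := max 0 ((c - y 0) / m + 1) with ht
    have ht0 : (0:ℝ) ≤ t := le_max_left _ _
    have := hgrow 0 self_mem_Ici t ht0 ht0
    have htbig : (c - y 0) / m + 1 ≤ t := le_max_right _ _
    have : m * t ≤ y t - y 0 := by simpa using this
    have h1 : m * ((c - y 0) / m + 1) ≤ m * t :=
      mul_le_mul_of_nonneg_left htbig hmpos.le
    rw [mul_add, mul_div_cancel₀ _ hmpos.ne', mul_one] at h1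
    have := hlt t ht0
    linarith
  have hyeq : z =ᶠ[atTop] y := by
    filter_upwards [eventually_ge_atTop (0:ℝ)] with t ht
    simp [hz, max_eq_left ht]
  have h2 : Tendsto y atTop (𝓝 L) := hztend.congr' hyeq
  rwa [hLc] at h2
end
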